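/- For r ≥ 1 real numbers β_1, ..., β_r all nonzero and k ≥ 3, define p_i = ∫_0^∞ √(2/π) e^{−x²/2} ∏_{ℓ≠i} (∫_0^{(|β_i|/|β_ℓ|)^{1/(k−2)} x} √(2/π) e^{−y²/2} dy) dx. Then p_i > 0 for every i, Σ_{i=1}^r p_i = 1, and if |β_i| ≥ |β_j| then p_i ≥ p_j. -/

import Mathlib

/-!
With `c_ℓ = |β_ℓ| ^ (1 / (k - 2))`, `p_i` is the probability that `i` maximizes `c_ℓ X_ℓ` for
i.i.d. half-normal `X_ℓ`. After substituting `u = c_i x`, the integrand of `p_i` is the `i`-th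
term of the product-rule derivative of `H(u) = ∏_ℓ Φ(u / c_ℓ)`, where `Φ` is the half-normal
distribution function, so `∑ p_i = H(∞) - H(0) = 1`. Positivity is clear, and `p_j ≤ p_i` for
`c_j ≤ c_i` holds factor by factor once the factors indexed by `i` and `j` are exchanged.
-/

open MeasureTheory Set Filter Finset Topology Real

noncomputable def halfNormalPDF (x : ℝ) : ℝ := √(2 / π) * exp (-x ^ 2 / 2)

lemma halfNormalPDF_pos (x : ℝ) : 0 < halfNormalPDF x := by
  unfold halfNormalPDF; positivity

lemma continuous_halfNormalPDF : Continuous halfNormalPDF := by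
  unfold halfNormalPDF; fun_prop

lemma halfNormalPDF_eq (x : ℝ) : halfNormalPDF x = √(2 / π) * exp (-(1 / 2) * x ^ 2) := by
  unfold halfNormalPDF; ring_nf

lemma integrable_halfNormalPDF : Integrable halfNormalPDF := by
  have := (integrable_exp_neg_mul_sq (b := 1 / 2) (by norm_num)).const_mul (√(2 / π))
  simpa only [← halfNormalPDF_eq] using this

lemma integral_Ioi_halfNormalPDF : ∫ x in Ioi 0, halfNormalPDF x = 1 := by
  simp only [halfNormalPDF_eq, integral_const_mul, integral_gaussian_Ioi]
  rw [← mul_div_assoc, ← sqrt_mul (by positivity),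
    show 2 / π * (π / (1 / 2)) = 2 ^ 2 by field_simp, sqrt_sq zero_le_two]
  norm_num

theorem Finset.prod_erase_le_prod_erase {ι R : Type*} [DecidableEq ι] [CommSemiring R]
    [PartialOrder R] [IsOrderedRing R] {s : Finset ι} {g : ι → R} {i j : ι} (hi : i ∈ s)
    (hj : j ∈ s) (hg : ∀ ℓ ∈ s, 0 ≤ g ℓ) (hij : g i ≤ g j) :
    ∏ ℓ ∈ s.erase j, g ℓ ≤ ∏ ℓ ∈ s.erase i, g ℓ := by
  rcases eq_or_ne i j with rfl | hne
  · rfl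
  rw [← mul_prod_erase _ _ (mem_erase.2 ⟨hne, hi⟩),
    ← mul_prod_erase _ _ (mem_erase.2 ⟨hne.symm, hj⟩), erase_right_comm]
  exact mul_le_mul_of_nonneg_right hij
    (prod_nonneg fun ℓ hℓ => hg ℓ (mem_of_mem_erase (mem_of_mem_erase hℓ)))

section ArgmaxWeight

variable {ι : Type*} [Fintype ι] {f : ℝ → ℝ} {c : ι → ℝ}

lemma intervalIntegral_zero_le_integral_Ioi (hf_nonneg : ∀ x, 0 ≤ f x)
    (hf_int : IntegrableOn f (Ioi 0)) {t : ℝ} (ht : 0 ≤ t) :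
    ∫ y in 0..t, f y ≤ ∫ y in Ioi 0, f y := by
  rw [intervalIntegral.integral_of_le ht]
  exact setIntegral_mono_set hf_int (.of_forall hf_nonneg)
    (.of_forall fun _ hx => hx.1)

lemma tendsto_prod_intervalIntegral_div_atTop (hf_int : IntegrableOn f (Ioi 0))
    (hc : ∀ i, 0 < c i) :
    Tendsto (fun u => ∏ ℓ, ∫ y in 0..u / c ℓ, f y) atTop
      (𝓝 ((∫ y in Ioi 0, f y) ^ Fintype.card ι)) := by
  rw [← card_univ, ← prod_const]
  exact tendsto_finsetProd _ fun ℓ _ =>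
    (intervalIntegral_tendsto_integral_Ioi 0 hf_int tendsto_id).comp
      (tendsto_id.atTop_div_const (hc ℓ))

variable [DecidableEq ι]

noncomputable def argmaxIntegrand (f : ℝ → ℝ) (c : ι → ℝ) (i : ι) (x : ℝ) : ℝ :=
  f x * ∏ ℓ ∈ univ.erase i, ∫ y in 0..c i / c ℓ * x, f y

/-- For i.i.d. `X_ℓ` with density `f` on `(0, ∞)`, the probability that `i` maximizes
`c ℓ * X ℓ`. -/
noncomputable def argmaxWeight (f : ℝ → ℝ) (c : ι → ℝ) (i : ι) : ℝ :=
  ∫ x in Ioi 0, argmaxIntegrand f c i x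

lemma argmaxIntegrand_nonneg (hf_nonneg : ∀ x, 0 ≤ f x) (hc : ∀ i, 0 < c i) (i : ι) {x : ℝ}
    (hx : 0 ≤ x) : 0 ≤ argmaxIntegrand f c i x :=
  mul_nonneg (hf_nonneg x) <| prod_nonneg fun ℓ _ =>
    intervalIntegral.integral_nonneg (by have := hc ℓ; have := hc i; positivity)
      fun y _ => hf_nonneg y

lemma integrableOn_argmaxIntegrand (hf : Continuous f) (hf_nonneg : ∀ x, 0 ≤ f x)
    (hf_int : IntegrableOn f (Ioi 0)) (hc : ∀ i, 0 < c i) (i : ι) :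
    IntegrableOn (argmaxIntegrand f c i) (Ioi 0) := by
  have hcont : Continuous fun x => ∏ ℓ ∈ univ.erase i, ∫ y in 0..c i / c ℓ * x, f y :=
    continuous_finsetProd _ fun _ _ =>
      (intervalIntegral.continuous_primitive (fun _ _ => hf.intervalIntegrable _ _) 0).comp
        (continuous_const_mul _)
  refine hf_int.mul_bdd (c := (∫ y in Ioi 0, f y) ^ #(univ.erase i)) hcont.aestronglyMeasurable
    ((ae_restrict_iff' measurableSet_Ioi).2 (.of_forall fun x (hx : 0 < x) => ?_))
  have harg : ∀ ℓ, 0 ≤ c i / c ℓ * x := fun ℓ => by have := hc ℓ; have := hc i; positivity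
  have hΦ : ∀ ℓ, 0 ≤ ∫ y in 0..c i / c ℓ * x, f y := fun ℓ =>
    intervalIntegral.integral_nonneg (harg ℓ) fun y _ => hf_nonneg y
  rw [Real.norm_of_nonneg (prod_nonneg fun ℓ _ => hΦ ℓ), ← prod_const]
  exact prod_le_prod (fun ℓ _ => hΦ ℓ) fun ℓ _ =>
    intervalIntegral_zero_le_integral_Ioi hf_nonneg hf_int (harg ℓ)

lemma argmaxWeight_pos (hf : Continuous f) (hf_pos : ∀ x, 0 < f x)
    (hf_int : IntegrableOn f (Ioi 0)) (hc : ∀ i, 0 < c i) (i : ι) : 0 < argmaxWeight f c i := by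
  have hf_nonneg x := (hf_pos x).le
  have hpos : Set.Ioi 0 ⊆ Function.support (argmaxIntegrand f c i) := fun x (hx : 0 < x) =>
    ne_of_gt <| mul_pos (hf_pos x) <| prod_pos fun ℓ _ =>
      intervalIntegral.intervalIntegral_pos_of_pos_on (hf.intervalIntegrable _ _)
        (fun y _ => hf_pos y) (by have := hc i; have := hc ℓ; positivity)
  rw [argmaxWeight, setIntegral_pos_iff_support_of_nonneg_ae
    ((ae_restrict_iff' measurableSet_Ioi).2 (.of_forall fun x hx =>
      argmaxIntegrand_nonneg hf_nonneg hc i (le_of_lt hx)))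
    (integrableOn_argmaxIntegrand hf hf_nonneg hf_int hc i), inter_eq_self_of_subset_right hpos]
  simp

lemma argmaxWeight_le_of_le (hf : Continuous f) (hf_nonneg : ∀ x, 0 ≤ f x)
    (hf_int : IntegrableOn f (Ioi 0)) (hc : ∀ i, 0 < c i) {i j : ι} (hij : c j ≤ c i) :
    argmaxWeight f c j ≤ argmaxWeight f c i := by
  refine setIntegral_mono_on (integrableOn_argmaxIntegrand hf hf_nonneg hf_int hc j)
    (integrableOn_argmaxIntegrand hf hf_nonneg hf_int hc i) measurableSet_Ioi
    fun x (hx : 0 < x) => ?_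
  have hΦ_nonneg : ∀ {t}, 0 ≤ t → 0 ≤ ∫ y in 0..t, f y := fun ht =>
    intervalIntegral.integral_nonneg ht fun y _ => hf_nonneg y
  have hΦ_mono : ∀ {s t}, 0 ≤ s → s ≤ t → ∫ y in 0..s, f y ≤ ∫ y in 0..t, f y := fun hs hst =>
    intervalIntegral.integral_mono_interval le_rfl hs hst (.of_forall hf_nonneg)
      (hf.intervalIntegrable _ _)
  have harg : ∀ a ℓ, 0 ≤ c a / c ℓ * x := fun a ℓ => by have := hc a; have := hc ℓ; positivity
  calc argmaxIntegrand f c j x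
      ≤ f x * ∏ ℓ ∈ univ.erase j, ∫ y in 0..c i / c ℓ * x, f y := by
        refine mul_le_mul_of_nonneg_left (prod_le_prod (fun ℓ _ => hΦ_nonneg (harg j ℓ))
          fun ℓ _ => hΦ_mono (harg j ℓ) ?_) (hf_nonneg x)
        have := hc ℓ
        gcongr
    _ ≤ argmaxIntegrand f c i x := by
        refine mul_le_mul_of_nonneg_left (prod_erase_le_prod_erase (mem_univ i) (mem_univ j)
          (fun ℓ _ => hΦ_nonneg (harg i ℓ)) (hΦ_mono (harg i i) ?_)) (hf_nonneg x)
        have := hc i; have := hc j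
        gcongr

lemma hasDerivAt_prod_intervalIntegral_div (hf : Continuous f) (hc : ∀ i, c i ≠ 0) (u : ℝ) :
    HasDerivAt (fun u => ∏ ℓ, ∫ y in 0..u / c ℓ, f y)
      (∑ i, (c i)⁻¹ * argmaxIntegrand f c i (u / c i)) u := by
  have hΦ : ∀ ℓ, HasDerivAt (fun u => ∫ y in 0..u / c ℓ, f y) (f (u / c ℓ) * (1 / c ℓ)) u :=
    fun ℓ => (hf.integral_hasStrictDerivAt 0 (u / c ℓ)).hasDerivAt.comp (h := (· / c ℓ)) u
      ((hasDerivAt_id' u).div_const (c ℓ))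
  refine (HasDerivAt.fun_finsetProd fun ℓ _ => hΦ ℓ).congr_deriv (sum_congr rfl fun i _ => ?_)
  have harg : ∀ ℓ, c i / c ℓ * (u / c i) = u / c ℓ := fun ℓ => by field_simp [hc i]
  simp only [argmaxIntegrand, harg, smul_eq_mul]
  ring

theorem sum_argmaxWeight [Nonempty ι] (hf : Continuous f) (hf_nonneg : ∀ x, 0 ≤ f x)
    (hf_int : IntegrableOn f (Ioi 0)) (hc : ∀ i, 0 < c i) :
    ∑ i, argmaxWeight f c i = (∫ y in Ioi 0, f y) ^ Fintype.card ι := by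
  set g : ι → ℝ → ℝ := fun i u => (c i)⁻¹ * argmaxIntegrand f c i (u / c i)
  have hg_int : ∀ i, IntegrableOn (g i) (Ioi 0) := fun i => by
    have := (integrableOn_Ioi_comp_mul_left_iff (argmaxIntegrand f c i) 0 (inv_pos.2 (hc i))).2
      (by simpa using integrableOn_argmaxIntegrand hf hf_nonneg hf_int hc i)
    simp only [g, div_eq_inv_mul]
    exact this.const_mul _
  have hweight : ∀ i, argmaxWeight f c i = ∫ u in Ioi 0, g i u := fun i => by
    have := integral_comp_mul_left_Ioi (argmaxIntegrand f c i) 0 (inv_pos.2 (hc i))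
    simp only [g, integral_const_mul, div_eq_inv_mul, this, mul_zero, inv_inv, smul_eq_mul,
      inv_mul_cancel_left₀ (hc i).ne', argmaxWeight]
  have hFTC := integral_Ioi_of_hasDerivAt_of_tendsto'
    (fun u _ => hasDerivAt_prod_intervalIntegral_div hf (fun i => (hc i).ne') u)
    (integrable_finsetSum _ fun i _ => hg_int i) (tendsto_prod_intervalIntegral_div_atTop hf_int hc)
  have hstart : ∏ ℓ, ∫ y in 0..0 / c ℓ, f y = 0 :=
    prod_eq_zero (mem_univ (Classical.arbitrary ι)) (by simp)
  rw [sum_congr rfl fun i _ => hweight i, ← integral_finsetSum _ fun i _ => hg_int i]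
  simpa [hstart] using hFTC

end ArgmaxWeight

/-- The mixture weights `p_i` of the limiting mixture of Gaussians: for nonzero
`β_1, ..., β_r` and `k ≥ 3`, with
`p_i = ∫_0^∞ √(2/π) e^{−x²/2} ∏_{ℓ≠i} (∫_0^{(|β_i|/|β_ℓ|)^{1/(k−2)} x} √(2/π) e^{−y²/2} dy) dx`,
each `p_i` is positive, they sum to `1`, and `p_i ≥ p_j` whenever `|β_i| ≥ |β_j|`. -/
theorem mixture_weights_properties (r k : ℕ) (hr : 1 ≤ r) (hk : 3 ≤ k)
    (β : Fin r → ℝ) (hβ : ∀ i, β i ≠ 0)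
    (p : Fin r → ℝ)
    (hp : ∀ i, p i =
      ∫ x in Set.Ioi (0 : ℝ),
        Real.sqrt (2 / Real.pi) * Real.exp (-x ^ 2 / 2) *
          ∏ ℓ ∈ Finset.univ.erase i,
            ∫ y in Set.Ioo (0 : ℝ) ((|β i| / |β ℓ|) ^ ((1 : ℝ) / ((k : ℝ) - 2)) * x),
              Real.sqrt (2 / Real.pi) * Real.exp (-y ^ 2 / 2)) :
    (∀ i, 0 < p i) ∧ (∑ i, p i = 1) ∧
      ∀ i j, |β j| ≤ |β i| → p j ≤ p i := by
  have hexp : 0 < 1 / ((k : ℝ) - 2) := by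
    have : (3 : ℝ) ≤ k := by exact_mod_cast hk
    exact one_div_pos.2 (by linarith)
  set c : Fin r → ℝ := fun i => |β i| ^ (1 / ((k : ℝ) - 2))
  have hc : ∀ i, 0 < c i := fun i => rpow_pos_of_pos (abs_pos.2 (hβ i)) _
  have hp_eq : ∀ i, p i = argmaxWeight halfNormalPDF c i := fun i => by
    rw [hp i, argmaxWeight]
    refine setIntegral_congr_fun measurableSet_Ioi fun x (hx : 0 < x) => ?_
    simp only [argmaxIntegrand, c, div_rpow (abs_nonneg _) (abs_nonneg _)]
    refine congrArg _ (prod_congr rfl fun ℓ _ => ?_)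
    have := hc i; have := hc ℓ
    rw [intervalIntegral.integral_of_le (by positivity), integral_Ioc_eq_integral_Ioo]
    rfl
  have : Nonempty (Fin r) := ⟨⟨0, hr⟩⟩
  have hf_nonneg x := (halfNormalPDF_pos x).le
  have hf_int := integrable_halfNormalPDF.integrableOn (s := Ioi 0)
  simp only [hp_eq]
  refine ⟨argmaxWeight_pos continuous_halfNormalPDF halfNormalPDF_pos hf_int hc, ?_,
    fun i j hij => argmaxWeight_le_of_le continuous_halfNormalPDF hf_nonneg hf_int hc
      (rpow_le_rpow (abs_nonneg _) hij hexp.le)⟩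
  rw [sum_argmaxWeight continuous_halfNormalPDF hf_nonneg hf_int hc,
    integral_Ioi_halfNormalPDF, one_pow]
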